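/- arXiv:2306.15145 — 2 statements merged into one kernel-verified Lean document; each statement's English description precedes it below -/
import Mathlib

section
/- In a core input-output network, the super-simple nodes appear in the same order on every ιo-simple path; that is, if ρ₁ and ρ₂ are super-simple nodes and ρ₁ appears before ρ₂ on some ιo-simple path, then ρ₁ appears before ρ₂ on every ιo-simple path. -/
/-- A simple (directed) path from `a` to `b`: nonempty node list, consecutive arrows,
no repeated nodes. -/
def IsSPath {V : Type*} (E : V → V → Prop) (a b : V) (p : List V) : Prop :=
  p.Chain' E ∧ p.Nodup ∧ p.head? = some a ∧ p.getLast? = some b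

/-- An `ιo`-simple path. -/
def IoSPath {V : Type*} (E : V → V → Prop) (ι o : V) (p : List V) : Prop :=
  IsSPath E ι o p

/-- A node is simple if it lies on some `ιo`-simple path. -/
def SimpleNode {V : Type*} (E : V → V → Prop) (ι o v : V) : Prop :=
  ∃ p, IoSPath E ι o p ∧ v ∈ p

/-- A node is appendage if it is not simple. -/
def Appendage {V : Type*} (E : V → V → Prop) (ι o v : V) : Prop :=
  ¬ SimpleNode E ι o v

/-- A node is super-simple if it lies on every `ιo`-simple path. -/
def SuperSimple {V : Type*} (E : V → V → Prop) (ι o v : V) : Prop :=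
  ∀ p, IoSPath E ι o p → v ∈ p

/-- A core network: every node is reachable from `ι` and reaches `o`. -/
def Core {V : Type*} (E : V → V → Prop) (ι o : V) : Prop :=
  ∀ v, Relation.ReflTransGen E ι v ∧ Relation.ReflTransGen E v o

/-- `a` occurs (strictly) before `b` on some `ιo`-simple path. -/
def OccBefore {V : Type*} (E : V → V → Prop) (ι o a b : V) : Prop :=
  ∃ p, IoSPath E ι o p ∧ [a, b].Sublist p

/-- Strict partial order on simple nodes induced by super-simple nodes:
`a ≺ b` iff there is a super-simple node `ρ` with `a` (weakly) before `ρ`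
and `ρ` (weakly) before `b` along `ιo`-simple paths, and `a ≠ b`. -/
def SLt {V : Type*} (E : V → V → Prop) (ι o a b : V) : Prop :=
  a ≠ b ∧ ∃ ρ, SuperSimple E ι o ρ ∧ (a = ρ ∨ OccBefore E ι o a ρ) ∧
    (b = ρ ∨ OccBefore E ι o ρ b)

/-- Adjacent (consecutive) super-simple nodes. -/
def AdjSS {V : Type*} (E : V → V → Prop) (ι o ρ ρ' : V) : Prop :=
  SuperSimple E ι o ρ ∧ SuperSimple E ι o ρ' ∧ SLt E ι o ρ ρ' ∧
  ¬ ∃ ρ'', SuperSimple E ι o ρ'' ∧ SLt E ι o ρ ρ'' ∧ SLt E ι o ρ'' ρ'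

/-- The simple subnetwork between adjacent super-simple nodes `ρ ≺ ρ'`. -/
def SimpleSubnet {V : Type*} (E : V → V → Prop) (ι o ρ ρ' : V) : Set V :=
  {σ | SimpleNode E ι o σ ∧ SLt E ι o ρ σ ∧ SLt E ι o σ ρ'}

/-- Two simple nodes lie in the same simple subnetwork. -/
def SameSimpleSubnet {V : Type*} (E : V → V → Prop) (ι o a b : V) : Prop :=
  ∃ ρ ρ', AdjSS E ι o ρ ρ' ∧ a ∈ SimpleSubnet E ι o ρ ρ' ∧
    b ∈ SimpleSubnet E ι o ρ ρ'

/-- `a ⪯ b`: either `a ≺ b`, or `a = b` is super-simple, or `a`, `b` lie in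
the same simple subnetwork. -/
def SLe {V : Type*} (E : V → V → Prop) (ι o a b : V) : Prop :=
  SLt E ι o a b ∨ (a = b ∧ SuperSimple E ι o a) ∨ SameSimpleSubnet E ι o a b

/-- An appendage path from `a` to `b`: a simple path containing an appendage
node, all of whose nodes other than the endpoints are appendage. -/
def AppPath {V : Type*} (E : V → V → Prop) (ι o a b : V) (p : List V) : Prop :=
  IsSPath E a b p ∧ (∃ x ∈ p, Appendage E ι o x) ∧
  ∀ x ∈ p, x ≠ a → x ≠ b → Appendage E ι o x

/-- Reachability inside a set of nodes. -/
def ReachIn {V : Type*} (E : V → V → Prop) (s : Set V) (a b : V) : Prop :=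
  Relation.ReflTransGen (fun x y => E x y ∧ x ∈ s ∧ y ∈ s) a b

/-- `a` and `b` belong to the same transitive (strongly connected) component
of the subnetwork induced on `s`. -/
def SameTCIn {V : Type*} (E : V → V → Prop) (s : Set V) (a b : V) : Prop :=
  a ∈ s ∧ b ∈ s ∧ ReachIn E s a b ∧ ReachIn E s b a

/-- A super-appendage node: an appendage node whose transitive component in
every complementary subnetwork `C_S` consists only of appendage nodes. -/
def SuperAppendage {V : Type*} (E : V → V → Prop) (ι o τ : V) : Prop :=
  Appendage E ι o τ ∧ ∀ p, IoSPath E ι o p → τ ∉ p →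
    ∀ x, SameTCIn E {v | v ∉ p} τ x → Appendage E ι o x

/-- An appendage subnetwork: a transitive component of the subnetwork of
super-appendage nodes. -/
def IsAppSubnet {V : Type*} (E : V → V → Prop) (ι o : V) (A : Set V) : Prop :=
  ∃ τ, SuperAppendage E ι o τ ∧
    A = {x | SameTCIn E {v | SuperAppendage E ι o v} τ x}

/-- There is an appendage path from `σ` to `κ`. -/
def HasAppPathTo {V : Type*} (E : V → V → Prop) (ι o σ κ : V) : Prop :=
  ∃ p, AppPath E ι o σ κ p

/-- `σ = σᵘ(κ)`: if `κ` is simple then `σ = κ`; otherwise `σ` is a minimal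
upstream simple node with an appendage path to `κ`. -/
def IsSigmaU {V : Type*} (E : V → V → Prop) (ι o κ σ : V) : Prop :=
  (SimpleNode E ι o κ ∧ σ = κ) ∨
  (Appendage E ι o κ ∧ SimpleNode E ι o σ ∧ HasAppPathTo E ι o σ κ ∧
    ∀ σ', SimpleNode E ι o σ' → HasAppPathTo E ι o σ' κ → ¬ SLt E ι o σ' σ)

/-- There is an appendage path from some node of `A` to `σ`. -/
def HasAppPathFromSet {V : Type*} (E : V → V → Prop) (ι o : V) (A : Set V)
    (σ : V) : Prop :=
  ∃ τ ∈ A, ∃ p, AppPath E ι o τ σ p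

/-- `σ = σᵈ(A)`: a maximal downstream simple node with an appendage path
from `A`. -/
def IsSigmaD {V : Type*} (E : V → V → Prop) (ι o : V) (A : Set V) (σ : V) : Prop :=
  SimpleNode E ι o σ ∧ HasAppPathFromSet E ι o A σ ∧
    ∀ σ', SimpleNode E ι o σ' → HasAppPathFromSet E ι o A σ' → ¬ SLt E ι o σ σ'

/-- A simple (directed) cycle, given by its list of distinct nodes with a
closing arrow from the last node back to the first. -/
def IsSimpleCycle {V : Type*} (E : V → V → Prop) (c : List V) : Prop :=
  c.Chain' E ∧ c.Nodup ∧ ∃ a b, c.head? = some a ∧ c.getLast? = some b ∧ E b a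

/-- `τ` is a linked appendage node of the simple subnetwork determined by the
adjacent super-simple pair `ρ ≺ ρ'`. -/
def Linked {V : Type*} (E : V → V → Prop) (ι o ρ ρ' τ : V) : Prop :=
  Appendage E ι o τ ∧ ¬ SuperAppendage E ι o τ ∧
  ∃ p, IoSPath E ι o p ∧ τ ∉ p ∧ ∀ x, SameTCIn E {v | v ∉ p} τ x →
    x = τ ∨ x ∈ SimpleSubnet E ι o ρ ρ' ∨
      (Appendage E ι o x ∧ ¬ SuperAppendage E ι o x)

/-- The structural subnetwork determined by adjacent super-simple nodes
`ρ ≺ ρ'`: the two super-simple nodes, the simple subnetwork between them,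
and its linked appendage nodes. -/
def StructuralSet {V : Type*} (E : V → V → Prop) (ι o ρ ρ' : V) : Set V :=
  {ρ, ρ'} ∪ SimpleSubnet E ι o ρ ρ' ∪ {τ | Linked E ι o ρ ρ' τ}

/-- `L` is a structural subnetwork. -/
def IsStructSubnet {V : Type*} (E : V → V → Prop) (ι o : V) (L : Set V) : Prop :=
  ∃ ρ ρ', AdjSS E ι o ρ ρ' ∧ L = StructuralSet E ι o ρ ρ'

/-!
If `ρ₁` precedes `ρ₂` on the `ιo`-simple path `p` but follows it on `q`, then `p` up to `ρ₁`
followed by `q` from `ρ₁` is an `ι`-`o` walk avoiding `ρ₂`. Shortcutting its cycles yields an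
`ιo`-simple path missing the super-simple node `ρ₂`, which is impossible.
-/

section

variable {V : Type*} {E : V → V → Prop} {a b x : V}

theorem IsSPath.cons {y : V} {p : List V} (hxy : E x y) (hx : x ∉ p) (h : IsSPath E y b p) :
    IsSPath E x b (x :: p) := by
  obtain ⟨hc, hn, hh, hl⟩ := h
  cases p with
  | nil => simp at hh
  | cons z p =>
    obtain rfl : z = y := by simpa using hh
    exact ⟨List.IsChain.cons_cons hxy hc, hn.cons hx, rfl, by rwa [List.getLast?_cons_cons]⟩

theorem IsSPath.suffix {u v : List V} (h : IsSPath E a b (u ++ x :: v)) :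
    IsSPath E x b (x :: v) :=
  ⟨List.IsChain.suffix h.1 (List.suffix_append _ _), h.2.1.of_append_right, rfl,
    by rw [← h.2.2.2, List.getLast?_append_cons]⟩

theorem exists_isSPath_subset_of_isChain {l : List V} (hc : l.IsChain E)
    (hh : l.head? = some a) (hl : l.getLast? = some b) : ∃ p, IsSPath E a b p ∧ p ⊆ l := by
  induction l generalizing a with
  | nil => simp at hh
  | cons z l ih =>
    obtain rfl : z = a := by simpa using hh
    rcases l with _ | ⟨y, l⟩
    · obtain rfl : z = b := by simpa using hl
      exact ⟨[z], ⟨.singleton z, List.nodup_singleton z, rfl, rfl⟩, List.Subset.refl _⟩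
    obtain ⟨p, hp, hpl⟩ := ih hc.tail rfl (by rwa [List.getLast?_cons_cons] at hl)
    by_cases hz : z ∈ p
    · -- cut the cycle through `z`
      obtain ⟨u, v, rfl⟩ := List.append_of_mem hz
      exact ⟨z :: v, hp.suffix, fun w hw => .tail _ (hpl (by simp_all))⟩
    · exact ⟨z :: p, hp.cons (List.rel_of_isChain_cons_cons hc) hz, List.cons_subset_cons _ hpl⟩

theorem exists_isSPath_splice {a' b' : V} {s t u v : List V} (hp : IsSPath E a b (s ++ x :: t))
    (hq : IsSPath E a' b' (u ++ x :: v)) : ∃ r, IsSPath E a b' r ∧ r ⊆ s ++ x :: v := by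
  have hc : (s ++ [x] ++ v).IsChain E :=
    List.IsChain.append_overlap (List.IsChain.prefix hp.1 ⟨t, by simp⟩)
      (List.IsChain.suffix hq.1 ⟨u, by simp⟩) (List.cons_ne_nil x [])
  refine exists_isSPath_subset_of_isChain (by simpa using hc) ?_ ?_
  · rw [← hp.2.2.1]; cases s <;> rfl
  · rw [← hq.2.2.2, List.getLast?_append_cons, List.getLast?_append_cons]

end

theorem superSimple_order_independent_general {V : Type*} (E : V → V → Prop) (ι o : V)
    (ρ₁ ρ₂ : V)
    (h1 : SuperSimple E ι o ρ₁) (h2 : SuperSimple E ι o ρ₂)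
    (p : List V) (hp : IoSPath E ι o p) (hb : [ρ₁, ρ₂].Sublist p) :
    ∀ q, IoSPath E ι o q → [ρ₁, ρ₂].Sublist q := by
  intro q hq
  obtain ⟨s, t, rfl, hρ₂t⟩ : ∃ s t, p = s ++ ρ₁ :: t ∧ ρ₂ ∈ t := by
    obtain ⟨r₁, r₂, rfl, hρ₁, hρ₂⟩ := List.cons_sublist_iff.1 hb
    obtain ⟨s, t, rfl⟩ := List.append_of_mem hρ₁
    exact ⟨s, t ++ r₂, by simp, by simp [List.singleton_sublist.1 hρ₂]⟩
  obtain ⟨u, v, rfl⟩ := List.append_of_mem (h1 q hq)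
  have hpn := List.disjoint_of_nodup_append hp.2.1
  have hqn := List.disjoint_of_nodup_append hq.2.1
  rcases List.mem_append.1 (h2 _ hq) with hρ₂u | hρ₂v
  · obtain ⟨r, hr, hrsub⟩ := exists_isSPath_splice hp hq
    rcases List.mem_append.1 (hrsub (h2 r hr)) with hs | hv
    · exact absurd (List.mem_cons_of_mem ρ₁ hρ₂t) (hpn hs)
    · exact absurd hv (hqn hρ₂u)
  · rcases List.mem_cons.1 hρ₂v with rfl | hv
    · exact absurd hρ₂t (List.nodup_cons.1 hp.2.1.of_append_right).1
    · exact (List.singleton_sublist.2 hv).cons_cons ρ₁ |>.trans (List.sublist_append_right u _)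

/-- In a core input-output network, super-simple nodes appear in the same
order on every `ιo`-simple path. -/
theorem superSimple_order_independent {V : Type*} (E : V → V → Prop) (ι o : V)
    (hcore : Core E ι o) (ρ₁ ρ₂ : V)
    (h1 : SuperSimple E ι o ρ₁) (h2 : SuperSimple E ι o ρ₂)
    (p : List V) (hp : IoSPath E ι o p) (hb : [ρ₁, ρ₂].Sublist p) :
    ∀ q, IoSPath E ι o q → [ρ₁, ρ₂].Sublist q :=
  superSimple_order_independent_general E ι o ρ₁ ρ₂ h1 h2 p hp hb
end

section
/- Let G be a core input-output network, A an appendage subnetwork of G, and κ a node of G not in A. If there exists a directed path from A to κ and every such path passes through a super-simple node ρ of G with σᵈ(A) ⪯ ρ ⪯ σᵘ(κ), then A is an appendage subnetwork of G(κ). -/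
/-!
Fix a super-simple node `ρ` with `σᵈ(A) ⪯ ρ ⪯ σᵘ(κ)` on some path from `A` to `κ`. Since
`ρ ⪯ σᵘ(κ)`, `ρ` lies on every `ικ`-simple path `p`. The heart of the matter is that the
transitive component of a node `y ∈ A` in the complement of `p` contains no node that is simple
in `G`: its first simple node `s` along a path from `y` admits an appendage path from `A`, so
`σᵈ(A) ≺ s` fails, which forces `s` to precede `ρ` on an `ιo`-simple path `r`. The component
cannot meet `r` after `ρ` (that would give an `ιo`-path avoiding `ρ`), so it avoids an
`ιo`-simple path running inside `p[..ρ] ∪ r[ρ..]`, and `y` being super-appendage makes `s`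
appendage. Hence the nodes of `A` are super-appendage in `G(κ)`, the transitive component of `A`
among the super-appendage nodes of `G(κ)` consists of super-appendage nodes of `G`, and the two
components coincide.
-/

namespace List

variable {α : Type*} {a b c : α} {l : List α}

theorem pair_sublist_iff : [a, b] <+ l ↔ ∃ l₁ l₂, l = l₁ ++ a :: l₂ ∧ b ∈ l₂ := by
  constructor
  · intro h
    induction l with
    | nil => cases h
    | cons x xs ih =>
      cases h with
      | cons _ h => obtain ⟨l₁, l₂, rfl, hb⟩ := ih h; exact ⟨x :: l₁, l₂, rfl, hb⟩
      | cons_cons _ h => exact ⟨[], xs, rfl, singleton_sublist.mp h⟩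
  · rintro ⟨l₁, l₂, rfl, hb⟩
    exact (singleton_sublist.mpr hb).cons_cons a |>.trans (sublist_append_right _ _)

theorem pair_sublist_or (ha : a ∈ l) (hb : b ∈ l) (hab : a ≠ b) : [a, b] <+ l ∨ [b, a] <+ l :=
  let R : α → α → Prop := fun x y => [x, y] <+ l ∨ [y, x] <+ l
  haveI : Std.Symm R := ⟨fun _ _ => Or.symm⟩
  (pairwise_of_forall_sublist (R := R) Or.inl).forall ha hb hab

theorem Nodup.ne_of_pair_sublist (hl : l.Nodup) (h : [a, b] <+ l) : a ≠ b := by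
  simpa using h.nodup hl

theorem Nodup.pair_sublist_trans (hl : l.Nodup) (h₁ : [a, b] <+ l) (h₂ : [b, c] <+ l) :
    [a, c] <+ l := by
  induction l with
  | nil => cases h₁
  | cons x xs ih =>
    obtain ⟨hx, hxs⟩ := nodup_cons.mp hl
    cases h₁ with
    | cons _ h₁ =>
      cases h₂ with
      | cons _ h₂ => exact (ih hxs h₁ h₂).cons x
      | cons_cons _ _ => exact absurd (h₁.subset (by simp)) hx
    | cons_cons _ h₁ =>
      cases h₂ with
      | cons _ h₂ => exact (singleton_sublist.mpr (h₂.subset (by simp : c ∈ [b, c]))).cons_cons _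
      | cons_cons _ _ => exact absurd (singleton_sublist.mp h₁) hx

theorem exists_first_split {P : α → Prop} (h : ∃ x ∈ l, P x) :
    ∃ l₁ x l₂, l = l₁ ++ x :: l₂ ∧ P x ∧ ∀ y ∈ l₁, ¬ P y := by
  induction l with
  | nil => simp at h
  | cons x xs ih =>
    by_cases hx : P x
    · exact ⟨[], x, xs, rfl, hx, by simp⟩
    · obtain ⟨l₁, y, l₂, rfl, hy, hl₁⟩ := ih (by simpa [hx] using h)
      exact ⟨x :: l₁, y, l₂, rfl, hy, forall_mem_cons.mpr ⟨hx, hl₁⟩⟩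

theorem exists_last_split {P : α → Prop} (h : ∃ x ∈ l, P x) :
    ∃ l₁ x l₂, l = l₁ ++ x :: l₂ ∧ P x ∧ ∀ y ∈ l₂, ¬ P y := by
  obtain ⟨l₁, x, l₂, hl, hx, hl₁⟩ := exists_first_split (l := l.reverse) (by simpa using h)
  exact ⟨l₂.reverse, x, l₁.reverse, by simpa using congrArg reverse hl, hx, by simpa using hl₁⟩

end List

open scoped List

section Paths

variable {V : Type*} {E : V → V → Prop} {s t : Set V} {a b c x y : V} {p p₁ p₂ : List V}

theorem ReachIn.trans (h₁ : ReachIn E s a b) (h₂ : ReachIn E s b c) : ReachIn E s a c :=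
  Relation.ReflTransGen.trans h₁ h₂

theorem ReachIn.mono (hst : s ⊆ t) (h : ReachIn E s a b) : ReachIn E t a b :=
  Relation.ReflTransGen.mono (fun _ _ h => ⟨h.1, hst h.2.1, hst h.2.2⟩) _ _ h

theorem ReachIn.mem_left (h : ReachIn E s a b) (hb : b ∈ s) : a ∈ s := by
  induction h using Relation.ReflTransGen.head_induction_on with
  | refl => exact hb
  | head hac _ _ => exact hac.2.1

theorem ReachIn.of_forall_mem (h : ReachIn E s a b)
    (hst : ∀ w ∈ s, ReachIn E s a w → ReachIn E s w b → w ∈ t) : ReachIn E t a b := by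
  induction h using Relation.ReflTransGen.head_induction_on with
  | refl => exact .refl
  | @head x c hxc hcb ih =>
    exact .head ⟨hxc.1, hst x hxc.2.1 .refl (.head hxc hcb), hst c hxc.2.2 (.single hxc) hcb⟩
      (ih fun w hw hcw hwb => hst w hw (.head hxc hcw) hwb)

theorem IsSPath.head_mem (h : IsSPath E a b p) : a ∈ p :=
  List.mem_of_mem_head? h.2.2.1

theorem IsSPath.getLast_mem (h : IsSPath E a b p) : b ∈ p :=
  List.mem_of_mem_getLast? h.2.2.2

theorem isSPath_append_cons_iff :
    IsSPath E a b (p₁ ++ x :: p₂) ↔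
      IsSPath E a x (p₁ ++ [x]) ∧ IsSPath E x b (x :: p₂) ∧ p₁.Disjoint p₂ := by
  show (List.IsChain E _ ∧ _) ↔ (List.IsChain E _ ∧ _) ∧ (List.IsChain E _ ∧ _) ∧ _
  rw [List.isChain_split]
  simp only [List.nodup_append, List.nodup_cons, List.head?_append, List.getLast?_append]
  cases p₁ <;> simp [List.disjoint_left] <;> grind

theorem IsSPath.reachIn (h : IsSPath E a b p) : ReachIn E {v | v ∈ p} a b := by
  obtain ⟨hc, -, hh, hl⟩ := h
  obtain ⟨t, rfl⟩ := List.head?_eq_some_iff.mp hh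
  refine List.relationReflTransGen_of_exists_isChain_cons t
    (List.IsChain.iff_mem.mp hc |>.imp fun _ _ h => ⟨h.2.2, h.1, h.2.1⟩) ?_
  simpa [List.getLast?_eq_some_getLast] using hl

theorem IsSPath.reachIn_of_mem (h : IsSPath E a b p) (hx : x ∈ p) :
    ReachIn E {v | v ∈ p} a x := by
  obtain ⟨p₁, p₂, rfl⟩ := List.append_of_mem hx
  exact (isSPath_append_cons_iff.mp h).1.reachIn.mono fun v hv => by simp at hv ⊢; tauto

theorem IsSPath.reachIn_prefix (h : IsSPath E a b (p₁ ++ x :: p₂)) :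
    ReachIn E {v | v ∉ p₂} a x := by
  obtain ⟨h₁, h₂, hd⟩ := isSPath_append_cons_iff.mp h
  refine h₁.reachIn.mono fun v hv hv₂ => ?_
  rcases List.mem_append.mp hv with hv | hv
  · exact hd hv hv₂
  · exact (List.nodup_cons.mp h₂.2.1).1 (List.mem_singleton.mp hv ▸ hv₂)

theorem IsSPath.reachIn_suffix (h : IsSPath E a b (p₁ ++ x :: p₂)) :
    ReachIn E {v | v ∉ p₁} x b := by
  obtain ⟨h₁, h₂, hd⟩ := isSPath_append_cons_iff.mp h
  refine h₂.reachIn.mono fun v hv hv₁ => ?_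
  rcases List.mem_cons.mp hv with rfl | hv
  · simpa using List.disjoint_of_nodup_append h₁.2.1 hv₁
  · exact hd hv₁ hv

theorem IsSPath.reachIn_head_avoid (h : IsSPath E a b p) (hxy : [x, y] <+ p) :
    ReachIn E {v | v ≠ y} a x := by
  obtain ⟨p₁, p₂, rfl, hy⟩ := List.pair_sublist_iff.mp hxy
  exact h.reachIn_prefix.mono fun v (hv : v ∉ p₂) hvy => hv (hvy ▸ hy)

theorem IsSPath.reachIn_last_avoid (h : IsSPath E a b p) (hxy : [x, y] <+ p) :
    ReachIn E {v | v ≠ x} y b := by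
  obtain ⟨p₁, p₂, rfl, hy⟩ := List.pair_sublist_iff.mp hxy
  obtain ⟨q₁, q₂, rfl⟩ := List.append_of_mem hy
  have h' : IsSPath E a b ((p₁ ++ x :: q₁) ++ y :: q₂) := by simpa using h
  exact h'.reachIn_suffix.mono fun v (hv : v ∉ p₁ ++ x :: q₁) hvx => hv (by simp [hvx])

theorem exists_isSPath_of_reflTransGen (h : Relation.ReflTransGen E a b) :
    ∃ p, IsSPath E a b p := by
  induction h using Relation.ReflTransGen.head_induction_on with
  | refl => exact ⟨[b], List.isChain_singleton b, List.nodup_singleton b, rfl, rfl⟩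
  | @head x c hxc _ ih =>
    obtain ⟨p, hp⟩ := ih
    by_cases hx : x ∈ p
    · obtain ⟨p₁, p₂, rfl⟩ := List.append_of_mem hx
      exact ⟨x :: p₂, (isSPath_append_cons_iff.mp hp).2.1⟩
    · obtain ⟨hc, hn, hh, hl⟩ := hp
      obtain ⟨t, rfl⟩ := List.head?_eq_some_iff.mp hh
      exact ⟨x :: c :: t, hc.cons_cons hxc, List.nodup_cons.mpr ⟨hx, hn⟩, rfl, by simpa using hl⟩

theorem ReachIn.exists_isSPath (h : ReachIn E s a b) (ha : a ∈ s) :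
    ∃ p, IsSPath E a b p ∧ ∀ x ∈ p, x ∈ s := by
  obtain ⟨p, hc, hn, hh, hl⟩ := exists_isSPath_of_reflTransGen h
  refine ⟨p, ⟨hc.imp fun _ _ h => h.1, hn, hh, hl⟩,
    List.IsChain.induction (· ∈ s) p hc (fun _ _ h _ => h.2.2) fun hne => ?_⟩
  rwa [(List.head_eq_iff_head?_eq_some hne).mpr hh]

end Paths

section Components

variable {V : Type*} {E : V → V → Prop} {s t : Set V} {a b c x : V} {p : List V}

theorem SameTCIn.refl (ha : a ∈ s) : SameTCIn E s a a := ⟨ha, ha, .refl, .refl⟩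

theorem SameTCIn.symm (h : SameTCIn E s a b) : SameTCIn E s b a :=
  ⟨h.2.1, h.1, h.2.2.2, h.2.2.1⟩

theorem SameTCIn.trans (h₁ : SameTCIn E s a b) (h₂ : SameTCIn E s b c) : SameTCIn E s a c :=
  ⟨h₁.1, h₂.2.1, h₁.2.2.1.trans h₂.2.2.1, h₂.2.2.2.trans h₁.2.2.2⟩

theorem SameTCIn.of_forall_sameTCIn_mem (h : SameTCIn E s a b)
    (hst : ∀ c, SameTCIn E s a c → c ∈ t) : SameTCIn E t a b := by
  have transfer : ∀ {x y}, SameTCIn E s a x → SameTCIn E s a y → ReachIn E s x y →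
      ReachIn E t x y := fun hx hy hxy =>
    hxy.of_forall_mem fun w hw hxw hwy =>
      hst w ⟨h.1, hw, hx.2.2.1.trans hxw, hwy.trans hy.2.2.2⟩
  exact ⟨hst a (.refl h.1), hst b h, transfer (.refl h.1) h h.2.2.1,
    transfer h (.refl h.1) h.2.2.2⟩

theorem SameTCIn.of_mem_isSPath (h : SameTCIn E s a b) (hp : IsSPath E a b p)
    (hps : ∀ x ∈ p, x ∈ s) (hx : x ∈ p) : SameTCIn E s a x := by
  obtain ⟨p₁, p₂, rfl⟩ := List.append_of_mem hx
  refine ⟨h.1, hps x hx, (hp.reachIn_of_mem hx).mono fun v hv => hps v hv,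
    ReachIn.trans ?_ h.2.2.2⟩
  exact (isSPath_append_cons_iff.mp hp).2.1.reachIn.mono fun v hv =>
    hps v (by simp at hv ⊢; tauto)

end Components

section Network

variable {V : Type*} {E : V → V → Prop} {ι o κ ρ σ u w x : V} {p q R : List V}

theorem SimpleNode.simpleNode_source (h : SimpleNode E ι o x) : SimpleNode E ι o ι :=
  let ⟨p, hp, _⟩ := h
  ⟨p, hp, hp.head_mem⟩

theorem OccBefore.ne {a b : V} (h : OccBefore E ι o a b) : a ≠ b :=
  let ⟨_, hp, hab⟩ := h
  hp.2.1.ne_of_pair_sublist hab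

theorem SuperSimple.false_of_reachIn (hρ : SuperSimple E ι o ρ) (hw : w ≠ ρ)
    (h₁ : ReachIn E {v | v ≠ ρ} ι w) (h₂ : ReachIn E {v | v ≠ ρ} w o) : False := by
  obtain ⟨p, hp, hpρ⟩ := (h₁.trans h₂).exists_isSPath (h₁.mem_left hw)
  exact hpρ ρ (hρ p hp) rfl

theorem SuperSimple.not_occBefore_of_occBefore (hρ : SuperSimple E ι o ρ)
    (h : OccBefore E ι o x ρ) : ¬ OccBefore E ι o ρ x := by
  rintro ⟨q, hq, hρx⟩
  obtain ⟨r, hr, hxρ⟩ := h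
  exact hρ.false_of_reachIn (hr.2.1.ne_of_pair_sublist hxρ) (hr.reachIn_head_avoid hxρ)
    (hq.reachIn_last_avoid hρx)

theorem SuperSimple.pair_sublist_of_occBefore {ρ' : V} (hρ : SuperSimple E ι o ρ)
    (hρ' : SuperSimple E ι o ρ') (h : OccBefore E ι o ρ ρ') (hq : IoSPath E ι o q) :
    [ρ, ρ'] <+ q :=
  (List.pair_sublist_or (hρ q hq) (hρ' q hq) h.ne).resolve_right fun h' =>
    hρ'.not_occBefore_of_occBefore h ⟨q, hq, h'⟩

theorem SLe.slt_or_eq_of_superSimple_left {a b : V} (h : SLe E ι o a b)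
    (ha : SuperSimple E ι o a) : SLt E ι o a b ∨ a = b := by
  rcases h with h | h | ⟨_, _, hadj, ha', -⟩
  · exact Or.inl h
  · exact Or.inr h.1
  · exact (hadj.2.2.2 ⟨a, ha, ha'.2⟩).elim

theorem SLe.slt_or_eq_of_superSimple_right {a b : V} (h : SLe E ι o a b)
    (hb : SuperSimple E ι o b) : SLt E ι o a b ∨ a = b := by
  rcases h with h | h | ⟨_, _, hadj, -, hb'⟩
  · exact Or.inl h
  · exact Or.inr h.1
  · exact (hadj.2.2.2 ⟨b, hb, hb'.2⟩).elim

theorem SuperSimple.slt_of_occBefore_of_sle {t : V} (hρ : SuperSimple E ι o ρ)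
    (hu : OccBefore E ι o u ρ) (ht : SLe E ι o ρ t) : SLt E ι o u t := by
  rcases ht.slt_or_eq_of_superSimple_left hρ with ⟨-, ρ', hρ', hρρ', hρ't⟩ | rfl
  · have hu' : OccBefore E ι o u ρ' := by
      rcases hρρ' with rfl | hρρ'
      · exact hu
      · obtain ⟨r, hr, hur⟩ := hu
        exact ⟨r, hr, hr.2.1.pair_sublist_trans hur (hρ.pair_sublist_of_occBefore hρ' hρρ' hr)⟩
    refine ⟨?_, ρ', hρ', Or.inr hu', hρ't⟩
    rintro rfl
    rcases hρ't with rfl | h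
    · exact hu'.ne rfl
    · exact hρ'.not_occBefore_of_occBefore hu' h
  · exact ⟨hu.ne, ρ, hρ, Or.inr hu, Or.inl rfl⟩

theorem SuperSimple.slt_of_sle_of_occBefore {s : V} (hρ : SuperSimple E ι o ρ)
    (hσ : SLe E ι o σ ρ) (hs : OccBefore E ι o ρ s) : SLt E ι o σ s := by
  rcases hσ.slt_or_eq_of_superSimple_right hρ with ⟨-, ρ', hρ', hσρ', hρρ'⟩ | rfl
  · have hs' : OccBefore E ι o ρ' s := by
      rcases hρρ' with rfl | hρ'ρ
      · exact hs
      · obtain ⟨r, hr, hρs⟩ := hs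
        exact ⟨r, hr, hr.2.1.pair_sublist_trans (hρ'.pair_sublist_of_occBefore hρ hρ'ρ hr) hρs⟩
    refine ⟨?_, ρ', hρ', hσρ', Or.inr hs'⟩
    rintro rfl
    rcases hσρ' with rfl | h
    · exact hs'.ne rfl
    · exact hρ'.not_occBefore_of_occBefore h hs'
  · exact ⟨hs.ne, σ, hρ, Or.inl rfl, Or.inr hs⟩

theorem SuperSimple.mem_of_sle_sigmaU (hρ : SuperSimple E ι o ρ) (hσ : IsSigmaU E ι o κ σ)
    (hρσ : SLe E ι o ρ σ) (hp : IoSPath E ι κ p) : ρ ∈ p := by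
  by_contra hρp
  have hslt : ∀ p₁ u p₂, p = p₁ ++ u :: p₂ → SimpleNode E ι o u → SLt E ι o u σ := by
    rintro p₁ u p₂ rfl ⟨r, hr, hur⟩
    have huρ : u ≠ ρ := fun h => hρp (by simp [h])
    rcases List.pair_sublist_or hur (hρ r hr) huρ with h | h
    · exact hρ.slt_of_occBefore_of_sle ⟨r, hr, h⟩ hρσ
    · refine (hρ.false_of_reachIn huρ ?_ (hr.reachIn_last_avoid h)).elim
      exact (hp.reachIn_of_mem (by simp)).mono fun v hv hvρ => hρp (hvρ ▸ hv)
  rcases hσ with ⟨hκ, rfl⟩ | ⟨hκ, hσs, -, hmin⟩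
  · obtain ⟨p₁, rfl⟩ := List.getLast?_eq_some_iff.mp hp.2.2.2
    exact (hslt p₁ _ [] rfl hκ).1 rfl
  · obtain ⟨p₁, u, p₂, rfl, hu, hp₂⟩ := List.exists_last_split (P := SimpleNode E ι o)
      ⟨ι, hp.head_mem, hσs.simpleNode_source⟩
    have hup : IsSPath E u κ (u :: p₂) := (isSPath_append_cons_iff.mp hp).2.1
    refine hmin u hu ⟨u :: p₂, hup, ⟨κ, hup.getLast_mem, hκ⟩, fun x hx hxu _ => ?_⟩
      (hslt p₁ u p₂ rfl hu)
    exact hp₂ x ((List.mem_cons.mp hx).resolve_left hxu)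

theorem SuperSimple.exists_ioSPath_append (hρ : SuperSimple E ι o ρ)
    (hio : ∃ q, IoSPath E ι o q) (hR : IsSPath E ι ρ R) : ∃ q, IoSPath E ι o (R ++ q) := by
  obtain ⟨q, hq⟩ := hio
  obtain ⟨q₁, q₂, rfl⟩ := List.append_of_mem (hρ _ hq)
  obtain ⟨R₁, rfl⟩ := List.getLast?_eq_some_iff.mp hR.2.2.2
  have hq₂ := (isSPath_append_cons_iff.mp hq).2.1
  suffices hd : R₁.Disjoint q₂ by
    refine ⟨q₂, (?_ : IsSPath E ι o (R₁ ++ [ρ] ++ q₂))⟩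
    simpa using isSPath_append_cons_iff.mpr ⟨hR, hq₂, hd⟩
  intro w hwR hwq
  have hwρ : w ≠ ρ := fun h => (List.nodup_cons.mp hq₂.2.1).1 (h ▸ hwq)
  exact hρ.false_of_reachIn hwρ
    (hR.reachIn_head_avoid ((List.singleton_sublist.mpr hwR).append (List.Sublist.refl [ρ])))
    (hq.reachIn_last_avoid (List.pair_sublist_iff.mpr ⟨q₁, q₂, rfl, hwq⟩))

theorem SuperSimple.simpleNode_of_before {b : V} {p₁ p₂ : List V} (hρ : SuperSimple E ι o ρ)
    (hio : ∃ q, IoSPath E ι o q) (hp : IsSPath E ι b (p₁ ++ x :: p₂)) (hρp : ρ ∈ x :: p₂) :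
    SimpleNode E ι o x := by
  obtain ⟨q₁, q₂, hq⟩ := List.append_of_mem hρp
  have hp' : IsSPath E ι b ((p₁ ++ q₁) ++ ρ :: q₂) := by rw [List.append_assoc, ← hq]; exact hp
  obtain ⟨q, hq'⟩ := hρ.exists_ioSPath_append hio (isSPath_append_cons_iff.mp hp').1
  refine ⟨_, hq', List.mem_append_left q ?_⟩
  cases q₁ <;> simp_all

end Network

section Appendage

variable {V : Type*} {E : V → V → Prop} {ι o κ ρ σ y : V} {p : List V}

theorem SuperAppendage.false_of_sameTCIn_compl (hy : SuperAppendage E ι o y)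
    (hρ : SuperSimple E ι o ρ) (hσρ : SLe E ι o σ ρ) (hp : IsSPath E ι κ p) (hρp : ρ ∈ p)
    {s : V} (hys : SameTCIn E {v | v ∉ p} y s) (hs : SimpleNode E ι o s)
    (hσs : ¬ SLt E ι o σ s) : False := by
  obtain ⟨r, hr, hsr⟩ := hs
  have hsρ : s ≠ ρ := fun h => hys.2.1 (h ▸ hρp)
  rcases List.pair_sublist_or hsr (hρ r hr) hsρ with hsρr | hρsr
  swap
  · exact hσs (hρ.slt_of_sle_of_occBefore hσρ ⟨r, hr, hρsr⟩)
  obtain ⟨r₁, r₂, rfl⟩ := List.append_of_mem (hρ _ hr)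
  have hcompl : {v | v ∉ p} ⊆ {v | v ≠ ρ} := fun v hv hvρ => hv (hvρ ▸ hρp)
  have hafter : ∀ w, SameTCIn E {v | v ∉ p} y w → w ∉ r₂ := fun w hw hwr =>
    hρ.false_of_reachIn hsρ (hr.reachIn_head_avoid hsρr)
      (((hys.symm.trans hw).2.2.1.mono hcompl).trans
        (hr.reachIn_last_avoid (List.pair_sublist_iff.mpr ⟨r₁, r₂, rfl, hwr⟩)))
  obtain ⟨W, hW, hWsub⟩ := ReachIn.exists_isSPath
    (s := {v | v ∈ p ∨ v ∈ ρ :: r₂})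
    (((hp.reachIn_of_mem hρp).mono fun _ => Or.inl).trans
      ((isSPath_append_cons_iff.mp hr).2.1.reachIn.mono fun _ => Or.inr))
    (Or.inl hp.head_mem)
  have hWcomp : ∀ x, SameTCIn E {v | v ∉ p} y x → x ∉ W := fun x hx hxW =>
    (hWsub x hxW).elim hx.2.1 fun h =>
      (List.mem_cons.mp h).elim (fun h => hx.2.1 (h ▸ hρp)) (hafter x hx)
  exact hy.2 W hW (hWcomp y (.refl hys.1)) s (hys.of_forall_sameTCIn_mem hWcomp) ⟨_, hr, hsr⟩

theorem SuperAppendage.not_simpleNode_of_sameTCIn_compl {A : Set V} {z : V}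
    (hy : SuperAppendage E ι o y) (hyA : y ∈ A) (hσ : IsSigmaD E ι o A σ)
    (hρ : SuperSimple E ι o ρ) (hσρ : SLe E ι o σ ρ) (hp : IsSPath E ι κ p) (hρp : ρ ∈ p)
    (hz : SameTCIn E {v | v ∉ p} y z) : ¬ SimpleNode E ι o z := by
  intro hzs
  obtain ⟨α, hα, hαp⟩ := hz.2.2.1.exists_isSPath hz.1
  obtain ⟨α₁, s, α₂, rfl, hs, hα₁⟩ := List.exists_first_split (P := SimpleNode E ι o)
    ⟨z, hα.getLast_mem, hzs⟩
  have hys := hz.of_mem_isSPath hα hαp (x := s) (by simp)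
  have hα₁s := (isSPath_append_cons_iff.mp hα).1
  have happ : AppPath E ι o y s (α₁ ++ [s]) := by
    refine ⟨hα₁s, ⟨y, hα₁s.head_mem, hy.1⟩, fun x hx _ hxs => hα₁ x ?_⟩
    simpa [hxs] using hx
  exact hy.false_of_sameTCIn_compl hρ hσρ hp hρp hys hs (hσ.2.2 s hs ⟨y, hyA, _, happ⟩)

theorem superAppendage_of_separated (hio : ∃ q, IoSPath E ι o q) (hy : Appendage E ι o y)
    (hsep : ∀ p, IsSPath E y κ p → ∃ ρ ∈ p, SuperSimple E ι o ρ ∧ ∀ q, IoSPath E ι κ q → ρ ∈ q)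
    (hcomp : ∀ p, IoSPath E ι κ p → ∀ z, SameTCIn E {v | v ∉ p} y z → ¬ SimpleNode E ι o z) :
    SuperAppendage E ι κ y := by
  refine ⟨fun ⟨q, hq, hyq⟩ => ?_, fun p hp _ z hz ⟨q, hq, hzq⟩ => ?_⟩
  · obtain ⟨q₁, q₂, rfl⟩ := List.append_of_mem hyq
    obtain ⟨ρ, hρq, hρ, -⟩ := hsep _ (isSPath_append_cons_iff.mp hq).2.1
    exact hy (hρ.simpleNode_of_before hio hq hρq)
  · obtain ⟨q₁, q₂, rfl⟩ := List.append_of_mem hzq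
    obtain ⟨P, hP, hPsub⟩ := ReachIn.exists_isSPath (s := {v | v ∉ p ∨ v ∈ z :: q₂})
      ((hz.2.2.1.mono fun _ => Or.inl).trans
        ((isSPath_append_cons_iff.mp hq).2.1.reachIn.mono fun _ => Or.inr))
      (Or.inl hz.1)
    obtain ⟨ρ, hρP, hρ, hρκ⟩ := hsep P hP
    have hρz : ρ ∈ z :: q₂ := (hPsub ρ hρP).resolve_left (not_not.mpr (hρκ p hp))
    exact hcomp p hp z hz (hρ.simpleNode_of_before hio hq hρz)

theorem SuperAppendage.of_sameTCIn {s : Set V} {τ c : V} (hτ : SuperAppendage E ι o τ)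
    (happ : ∀ c, SameTCIn E s τ c → Appendage E ι o c) (hc : SameTCIn E s τ c) :
    SuperAppendage E ι o c := by
  refine ⟨happ c hc, fun q hq _ z hz => ?_⟩
  have hτc : SameTCIn E {v | v ∉ q} τ c :=
    hc.of_forall_sameTCIn_mem fun x hx hxq => happ x hx ⟨q, hq, hxq⟩
  exact hτ.2 q hq hτc.1 z (hτc.trans hz)

end Appendage

theorem A_induces_general {V : Type*} (E : V → V → Prop) (ι o : V)
    (hcore : Core E ι o) (A : Set V) (κ σd σu : V)
    (hA : IsAppSubnet E ι o A)
    (hd : IsSigmaD E ι o A σd) (hu : IsSigmaU E ι o κ σu)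
    (hex : ∃ τ ∈ A, Relation.ReflTransGen E τ κ)
    (hall : ∀ τ ∈ A, ∀ p, IsSPath E τ κ p →
      ∃ ρ ∈ p, SuperSimple E ι o ρ ∧ SLe E ι o σd ρ ∧ SLe E ι o ρ σu) :
    IsAppSubnet E ι κ A := by
  obtain ⟨τ, hτ, hA⟩ := hA
  have hAo : ∀ y ∈ A, SuperAppendage E ι o y := by rw [hA]; exact fun y hy => hy.2.1
  have hio : ∃ q, IoSPath E ι o q := exists_isSPath_of_reflTransGen (hcore ι).2
  have hsep : ∀ y ∈ A, ∀ p, IsSPath E y κ p →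
      ∃ ρ ∈ p, SuperSimple E ι o ρ ∧ ∀ q, IoSPath E ι κ q → ρ ∈ q := fun y hy p hp =>
    let ⟨ρ, hρp, hρ, _, hρσ⟩ := hall y hy p hp
    ⟨ρ, hρp, hρ, fun _ hq => hρ.mem_of_sle_sigmaU hu hρσ hq⟩
  obtain ⟨τ₁, hτ₁, hτ₁κ⟩ := hex
  obtain ⟨P, hP⟩ := exists_isSPath_of_reflTransGen hτ₁κ
  obtain ⟨ρ, -, hρ, hσρ, hρσ⟩ := hall τ₁ hτ₁ P hP
  have hcomp : ∀ y ∈ A, ∀ p, IoSPath E ι κ p →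
      ∀ z, SameTCIn E {v | v ∉ p} y z → ¬ SimpleNode E ι o z := fun y hy p hp _ =>
    (hAo y hy).not_simpleNode_of_sameTCIn_compl hy hd hρ hσρ hp (hρ.mem_of_sle_sigmaU hu hρσ hp)
  have hAκ : ∀ y ∈ A, SuperAppendage E ι κ y := fun y hy =>
    superAppendage_of_separated hio (hAo y hy).1 (hsep y hy) (hcomp y hy)
  have hτA : τ ∈ A := by rw [hA]; exact .refl hτ
  obtain ⟨p₀, hp₀⟩ := exists_isSPath_of_reflTransGen (hcore κ).1
  have happ : ∀ c, SameTCIn E {v | SuperAppendage E ι κ v} τ c → Appendage E ι o c :=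
    fun c hc => hcomp τ hτA p₀ hp₀ c <| hc.of_forall_sameTCIn_mem fun x hx hxp =>
      (hx.2.1 : SuperAppendage E ι κ x).1 ⟨p₀, hp₀, hxp⟩
  refine ⟨τ, hAκ τ hτA, hA.trans (Set.ext fun x => ⟨fun hx => ?_, fun hx => ?_⟩)⟩
  · exact hx.of_forall_sameTCIn_mem fun c hc => hAκ c (hA ▸ hc)
  · exact hx.of_forall_sameTCIn_mem fun c hc => hτ.of_sameTCIn happ hc

/-- If there is a path from the appendage subnetwork `A` to `κ ∉ A` and every
such path passes through a super-simple node `ρ` with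
`σᵈ(A) ⪯ ρ ⪯ σᵘ(κ)`, then `A` is an appendage subnetwork of `G(κ)`. -/
theorem A_induces {V : Type*} (E : V → V → Prop) (ι o : V)
    (hcore : Core E ι o) (A : Set V) (κ σd σu : V)
    (hA : IsAppSubnet E ι o A) (hκ : κ ∉ A)
    (hd : IsSigmaD E ι o A σd) (hu : IsSigmaU E ι o κ σu)
    (hex : ∃ τ ∈ A, Relation.ReflTransGen E τ κ)
    (hall : ∀ τ ∈ A, ∀ p, IsSPath E τ κ p →
      ∃ ρ ∈ p, SuperSimple E ι o ρ ∧ SLe E ι o σd ρ ∧ SLe E ι o ρ σu) :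
    IsAppSubnet E ι κ A :=
  A_induces_general E ι o hcore A κ σd σu hA hd hu hex hall
end
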